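/- arXiv:2210.09751 — 3 statements merged into one kernel-verified Lean document; each statement's English description precedes it below -/
import Mathlib

section
/- Let f : [0,1] → [0,1] be a homeomorphism whose set of non-wandering points is finite. Then the polynomial entropy of the induced map C(f) on the hyperspace C([0,1]) of subcontinua of [0,1] equals 2. -/
open Filter Topology TopologicalSpace Set
open scoped ENNReal

/-- The dynamic distance `d_n^f(x,y) = max_{0 ≤ k ≤ n-1} d(f^k x, f^k y)`. -/
noncomputable def dynDist {X : Type*} [MetricSpace X] (f : X → X) (n : ℕ) (x y : X) : ℝ :=
  ((Finset.range n).sup fun k => nndist (f^[k] x) (f^[k] y) : NNReal)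

/-- A finite set `E` is `(n,ε)`-separated for `f`. -/
def IsDynSeparated {X : Type*} [MetricSpace X] (f : X → X) (n : ℕ) (ε : ℝ) (E : Finset X) :
    Prop :=
  ∀ x ∈ E, ∀ y ∈ E, x ≠ y → ε ≤ dynDist f n x y

/-- `S(n,ε;Y)`: the maximal cardinality of an `(n,ε)`-separated subset of `Y`. -/
noncomputable def maxSep {X : Type*} [MetricSpace X] (f : X → X) (Y : Set X) (n : ℕ) (ε : ℝ) :
    ℕ :=
  sSup {m : ℕ | ∃ E : Finset X, ↑E ⊆ Y ∧ E.card = m ∧ IsDynSeparated f n ε E}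

/-- The polynomial entropy `h_pol(f;Y)`.  Since `ε ↦ S(n,ε;Y)` is nonincreasing, the limit as
`ε → 0` of the `limsup` coincides with the supremum over `ε > 0`. -/
noncomputable def polEnt {X : Type*} [MetricSpace X] (f : X → X) (Y : Set X) : ℝ≥0∞ :=
  ⨆ (ε : ℝ) (_ : 0 < ε),
    Filter.atTop.limsup fun n : ℕ =>
      ENNReal.ofReal (Real.log (maxSep f Y n ε) / Real.log n)

/-- The set of non-wandering points of `f`. -/
def nonWandering {X : Type*} [TopologicalSpace X] (f : X → X) : Set X :=
  {p | ∀ U ∈ nhds p, ∃ n : ℕ, 1 ≤ n ∧ (f^[n] '' U ∩ U).Nonempty}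

/-- The induced map `2^f` on the hyperspace of nonempty closed (= compact) subsets of a
compact metric space. -/
noncomputable def induced2 {X : Type*} [TopologicalSpace X] (f : X → X) (hf : Continuous f) :
    NonemptyCompacts X → NonemptyCompacts X :=
  fun A => ⟨⟨f '' A, A.isCompact.image hf⟩, A.nonempty.image f⟩

/-- The hyperspace `C(X)` of subcontinua (nonempty closed connected subsets) of `X`. -/
abbrev Subcontinua (X : Type*) [TopologicalSpace X] :=
  {A : NonemptyCompacts X // IsConnected (A : Set X)}

/-- The induced map `C(f)` on the hyperspace of subcontinua. -/
noncomputable def inducedC {X : Type*} [TopologicalSpace X] (f : X → X) (hf : Continuous f) :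
    Subcontinua X → Subcontinua X :=
  fun A => ⟨induced2 f hf A.1, A.2.image f hf.continuousOn⟩

/-- The `k`-fold symmetric product `X^{*k}`: nonempty subsets of `X` with at most `k` points. -/
abbrev SymProd (X : Type*) [TopologicalSpace X] (k : ℕ) :=
  {A : NonemptyCompacts X // (A : Set X).Finite ∧ (A : Set X).ncard ≤ k}

/-- The induced map `f^{*k}` on the `k`-fold symmetric product. -/
noncomputable def inducedSym {X : Type*} [TopologicalSpace X] (f : X → X) (hf : Continuous f)
    (k : ℕ) : SymProd X k → SymProd X k :=
  fun A => ⟨induced2 f hf A.1, A.2.1.image f, le_trans (Set.ncard_image_le A.2.1) A.2.2⟩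

/-- Sets `U 0, …, U (L-1)` are mutually singular for `f`. -/
def MutuallySingularSets {X : Type*} [TopologicalSpace X] (f : X → X) {L : ℕ}
    (U : Fin L → Set X) : Prop :=
  ∀ M : ℕ, ∃ x : X, ∃ n : Fin L → ℕ, (∀ j, 1 ≤ n j ∧ f^[n j] x ∈ U j) ∧
    ∀ i j, i ≠ j → (M : ℤ) < |(n i : ℤ) - (n j : ℤ)|

/-- A finite set `S ⊆ X \ NW(f)` is singular: it consists of mutually singular points, i.e.
every family of respective neighbourhoods of its points is mutually singular. -/
def IsSingularSet {X : Type*} [TopologicalSpace X] (f : X → X) (S : Set X) : Prop :=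
  S.Finite ∧ (∀ x ∈ S, x ∉ nonWandering f) ∧
  ∀ (L : ℕ) (x : Fin L → X), Function.Injective x → Set.range x = S →
    ∀ U : Fin L → Set X, (∀ j, U j ∈ nhds (x j)) → MutuallySingularSets f U

/-- The set of codings of length-`n` orbit segments of points of `Y` relative to the family
`F`, where the letter `none` stands for `Y_∞ = Y \ ⋃ F`. -/
def codings {X : Type*} (f : X → X) {L : ℕ} (F : Fin L → Set X) (Y : Set X) (n : ℕ) :
    Set (Fin n → Option (Fin L)) :=
  {w | ∃ x ∈ Y, ∀ j : Fin n, match w j with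
    | some i => f^[(j : ℕ)] x ∈ F i
    | none => f^[(j : ℕ)] x ∈ Y \ ⋃ i, F i}

/-- The polynomial entropy of `f` on `Y` relative to the family `F`:
`limsup_n log #A_n(F;Y) / log n`. -/
noncomputable def polEntRel {X : Type*} (f : X → X) {L : ℕ} (F : Fin L → Set X) (Y : Set X) :
    ℝ≥0∞ :=
  Filter.atTop.limsup fun n : ℕ =>
    ENNReal.ofReal (Real.log ((codings f F Y n).ncard) / Real.log n)

/-- The circle is connected. -/
theorem circle_isConnected_univ : IsConnected (Set.univ : Set Circle) := by
  have hsurj : Function.Surjective Circle.exp := fun z => ⟨Complex.arg z, Circle.exp_arg z⟩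
  have : ConnectedSpace Circle :=
    { toPreconnectedSpace := ⟨by
        rw [← Set.image_univ_of_surjective hsurj]
        exact isPreconnected_univ.image _ Circle.exp.continuous.continuousOn⟩,
      toNonempty := ⟨1⟩ }
  exact isConnected_univ

/-!
Every subcontinuum of `[0, 1]` is an interval `[[a, b]]`, and for monotone or antitone `f` the map
`C(f)` moves it to `[[f a, f b]]`; so Hausdorff distances along `C(f)`-orbits are bounded by the
dynamic distances of the endpoints. Along the orbits of `f`, `Φ x = ∑_{k<n} |f^k x - f^k 0|` is
monotone in `x`, takes values in `[0, n]` and satisfies `d_n^f(x, y) ≤ |Φ x - Φ y|`; coding a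
subcontinuum by `Φ` of its two endpoints gives `S(n, ε) ≤ (n / ε + 1)^2`, hence `h_pol(C(f)) ≤ 2`.

Conversely, a point `x` outside the finite non-wandering set is not `2`-periodic, so its
`f^2`-orbit `W : ℤ → [0, 1]` is strictly monotone or antitone, with a fixed gap
`δ = d(W (-1), W 0)`. The `Q^2` intervals `[[W (-i), W (-(Q + j))]]`, `i, j < Q`, are
`(4Q, δ)`-separated, because the time at which an endpoint crosses the gap identifies its index;
hence `S(n, δ) ≥ (n / 8)^2` and `h_pol(C(f)) ≥ 2`.
-/

open scoped unitInterval

section DynamicDistance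

variable {X : Type*} [MetricSpace X] (f : X → X)

lemma dynDist_nonneg (n : ℕ) (x y : X) : 0 ≤ dynDist f n x y :=
  NNReal.coe_nonneg _

@[simp]
lemma dynDist_self (n : ℕ) (x : X) : dynDist f n x x = 0 := by
  simp [dynDist]

lemma dynDist_comm (n : ℕ) (x y : X) : dynDist f n x y = dynDist f n y x := by
  simp only [dynDist, nndist_comm]

lemma dist_iterate_le_dynDist {n k : ℕ} (hk : k < n) (x y : X) :
    dist (f^[k] x) (f^[k] y) ≤ dynDist f n x y := by
  rw [← coe_nndist]
  exact NNReal.coe_le_coe.2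
    (Finset.le_sup (f := fun k => nndist (f^[k] x) (f^[k] y)) (Finset.mem_range.2 hk))

lemma dynDist_le_of_forall {n : ℕ} {x y : X} {r : ℝ} (hr : 0 ≤ r)
    (h : ∀ k < n, dist (f^[k] x) (f^[k] y) ≤ r) : dynDist f n x y ≤ r := by
  lift r to NNReal using hr
  refine NNReal.coe_le_coe.2 (Finset.sup_le fun k hk => ?_)
  rw [← NNReal.coe_le_coe, coe_nndist]
  exact h k (Finset.mem_range.1 hk)

lemma dynDist_le_sum_dist (n : ℕ) (x y : X) :
    dynDist f n x y ≤ ∑ k ∈ Finset.range n, dist (f^[k] x) (f^[k] y) :=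
  dynDist_le_of_forall f (Finset.sum_nonneg fun _ _ => dist_nonneg) fun _ hk =>
    Finset.single_le_sum (f := fun k => dist (f^[k] x) (f^[k] y)) (fun _ _ => dist_nonneg)
      (Finset.mem_range.2 hk)

variable {f} {Y : Set X} {n : ℕ} {ε : ℝ} {B : ℕ}

lemma maxSep_le (hB : ∀ E : Finset X, ↑E ⊆ Y → IsDynSeparated f n ε E → E.card ≤ B) :
    maxSep f Y n ε ≤ B :=
  csSup_le ⟨0, ∅, by simp, rfl, by simp [IsDynSeparated]⟩
    fun _ ⟨E, hEY, hcard, hE⟩ => hcard ▸ hB E hEY hE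

lemma card_le_maxSep (hB : ∀ E : Finset X, ↑E ⊆ Y → IsDynSeparated f n ε E → E.card ≤ B)
    {ι : Type*} {s : Finset ι} {φ : ι → X} (hε : 0 < ε) (hφY : ∀ i ∈ s, φ i ∈ Y)
    (hφ : ∀ i ∈ s, ∀ j ∈ s, i ≠ j → ε ≤ dynDist f n (φ i) (φ j)) :
    s.card ≤ maxSep f Y n ε := by
  classical
  have hinj : InjOn φ s := fun i hi j hj hij => by
    by_contra hne
    have := hφ i hi j hj hne
    rw [hij, dynDist_self] at this
    linarith
  have hsep : IsDynSeparated f n ε (s.image φ) := by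
    simp only [IsDynSeparated, Finset.forall_mem_image]
    exact fun i hi j hj hij => hφ i hi j hj fun h => hij (h ▸ rfl)
  rw [← Finset.card_image_of_injOn hinj]
  exact le_csSup ⟨B, fun _ ⟨E, hEY, hcard, hE⟩ => hcard ▸ hB E hEY hE⟩
    ⟨_, by simpa [Set.subset_def] using hφY, rfl, hsep⟩

end DynamicDistance

section PolynomialGrowth

lemma tendsto_add_div_log_atTop (d a : ℝ) :
    Tendsto (fun n : ℕ => d + a / Real.log n) atTop (𝓝 d) := by
  simpa using tendsto_const_nhds.add
    (tendsto_const_nhds.div_atTop (Real.tendsto_log_atTop.comp tendsto_natCast_atTop_atTop))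

variable {X : Type*} [MetricSpace X] {f : X → X} {Y : Set X} {d : ℕ}

lemma polEnt_le_of_maxSep_le
    (h : ∀ ε > 0, ∃ C : ℝ, ∀ᶠ n : ℕ in atTop, (maxSep f Y n ε : ℝ) ≤ C * (n : ℝ) ^ d) :
    polEnt f Y ≤ d := by
  refine iSup₂_le fun ε hε => ?_
  obtain ⟨C, hC⟩ := h ε hε
  -- Enlarging `C` to `max C 1` makes `log C` nonnegative, which covers `maxSep = 0`.
  have hbound : ∀ᶠ n : ℕ in atTop,
      ENNReal.ofReal (Real.log (maxSep f Y n ε) / Real.log n) ≤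
        ENNReal.ofReal (d + Real.log (max C 1) / Real.log n) := by
    filter_upwards [hC, eventually_gt_atTop 1] with n hn hn1
    have hlogn : 0 < Real.log n := Real.log_pos (by exact_mod_cast hn1)
    refine ENNReal.ofReal_le_ofReal ?_
    rw [div_le_iff₀ hlogn, add_mul, div_mul_cancel₀ _ hlogn.ne']
    have hC1 : 0 ≤ Real.log (max C 1) := Real.log_nonneg (le_max_right _ _)
    rcases (maxSep f Y n ε).eq_zero_or_pos with h0 | hpos
    · rw [h0, Nat.cast_zero, Real.log_zero]
      positivity
    calc Real.log (maxSep f Y n ε)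
        ≤ Real.log (max C 1 * (n : ℝ) ^ d) :=
          Real.log_le_log (by exact_mod_cast hpos)
            (hn.trans (by gcongr; exact le_max_left _ _))
      _ = d * Real.log n + Real.log (max C 1) := by
          rw [Real.log_mul (by positivity) (by positivity), Real.log_pow]; ring
  calc atTop.limsup (fun n : ℕ => ENNReal.ofReal (Real.log (maxSep f Y n ε) / Real.log n))
      ≤ atTop.limsup (fun n : ℕ => ENNReal.ofReal (d + Real.log (max C 1) / Real.log n)) :=
        limsup_le_limsup hbound
    _ = d := by
        rw [(ENNReal.tendsto_ofReal (tendsto_add_div_log_atTop _ _)).limsup_eq,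
          ENNReal.ofReal_natCast]

lemma le_polEnt_of_le_maxSep {ε c : ℝ} (hε : 0 < ε) (hc : 0 < c)
    (h : ∀ᶠ n : ℕ in atTop, c * (n : ℝ) ^ d ≤ maxSep f Y n ε) :
    (d : ℝ≥0∞) ≤ polEnt f Y := by
  refine le_iSup₂_of_le ε hε ?_
  have hbound : ∀ᶠ n : ℕ in atTop,
      ENNReal.ofReal (d + Real.log c / Real.log n) ≤
        ENNReal.ofReal (Real.log (maxSep f Y n ε) / Real.log n) := by
    filter_upwards [h, eventually_gt_atTop 1] with n hn hn1
    have hlogn : 0 < Real.log n := Real.log_pos (by exact_mod_cast hn1)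
    refine ENNReal.ofReal_le_ofReal ?_
    rw [le_div_iff₀ hlogn, add_mul, div_mul_cancel₀ _ hlogn.ne']
    calc d * Real.log n + Real.log c = Real.log (c * (n : ℝ) ^ d) := by
          rw [Real.log_mul hc.ne' (by positivity), Real.log_pow]; ring
      _ ≤ Real.log (maxSep f Y n ε) := Real.log_le_log (by positivity) hn
  calc (d : ℝ≥0∞)
      = atTop.limsup (fun n : ℕ => ENNReal.ofReal (d + Real.log c / Real.log n)) := by
        rw [(ENNReal.tendsto_ofReal (tendsto_add_div_log_atTop _ _)).limsup_eq,
          ENNReal.ofReal_natCast]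
    _ ≤ _ := limsup_le_limsup hbound

end PolynomialGrowth

/-- Distinct points with some coordinate `ε`-apart have distinct coordinatewise codes
`⌊Ψ x i / ε⌋`, of which there are `(⌊a / ε⌋ + 1) ^ card ι`. -/
lemma card_le_pow_of_exists_le_abs_sub {α ι : Type*} [Fintype ι] {E : Finset α}
    {Ψ : α → ι → ℝ} {a ε : ℝ} (hε : 0 < ε) (hΨ : ∀ x ∈ E, ∀ i, Ψ x i ∈ Icc 0 a)
    (hsep : ∀ x ∈ E, ∀ y ∈ E, x ≠ y → ∃ i, ε ≤ |Ψ x i - Ψ y i|) :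
    E.card ≤ (⌊a / ε⌋₊ + 1) ^ Fintype.card ι := by
  classical
  set code : α → ι → ℕ := fun x i => ⌊Ψ x i / ε⌋₊
  have hmaps : MapsTo code E
      (Fintype.piFinset fun _ : ι => Finset.range (⌊a / ε⌋₊ + 1) : Set (ι → ℕ)) := by
    intro x hx
    simp only [Finset.mem_coe, Fintype.mem_piFinset, Finset.mem_range, Nat.lt_succ_iff]
    exact fun i => Nat.floor_le_floor (div_le_div_of_nonneg_right (hΨ x hx i).2 hε.le)
  have hinj : InjOn code E := by
    intro x hx y hy hxy
    by_contra hne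
    obtain ⟨i, hi⟩ := hsep x hx y hy hne
    have hcode : ⌊Ψ x i / ε⌋₊ = ⌊Ψ y i / ε⌋₊ := congrFun hxy i
    have hx0 : 0 ≤ Ψ x i / ε := div_nonneg (hΨ x hx i).1 hε.le
    have hy0 : 0 ≤ Ψ y i / ε := div_nonneg (hΨ y hy i).1 hε.le
    have h1 := Nat.floor_le hx0
    have h2 := Nat.lt_floor_add_one (Ψ x i / ε)
    have h3 := Nat.floor_le hy0
    have h4 := Nat.lt_floor_add_one (Ψ y i / ε)
    rw [hcode] at h1 h2
    have : |Ψ x i / ε - Ψ y i / ε| < 1 := abs_sub_lt_iff.2 ⟨by linarith, by linarith⟩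
    rw [← sub_div, abs_div, abs_of_pos hε, div_lt_one hε] at this
    linarith
  simpa using Finset.card_le_card_of_injOn code hmaps hinj

lemma monotone_or_antitone_iterate {α : Type*} [Preorder α] {f : α → α}
    (hf : Monotone f ∨ Antitone f) (k : ℕ) : Monotone f^[k] ∨ Antitone f^[k] := by
  induction k with
  | zero => exact Or.inl monotone_id
  | succ k ih =>
    rw [Function.iterate_succ']
    rcases hf with hf | hf <;> rcases ih with ih | ih
    exacts [Or.inl (hf.comp ih), Or.inr (hf.comp_antitone ih), Or.inr (hf.comp_monotone ih),
      Or.inl (hf.comp ih)]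

lemma Set.mem_uIcc_of_mem_uIcc_of_mem_uIcc {α : Type*} [LinearOrder α] {u v w y z : α}
    (hv : z ∈ uIcc u v) (hw : z ∈ uIcc u w) (hy : y ∈ uIcc v w) : z ∈ uIcc u y := by
  simp only [mem_uIcc] at *
  rcases hv with hv | hv <;> rcases hw with hw | hw <;> rcases hy with hy | hy <;>
    rcases le_total z y with hzy | hzy <;>
    first | (left; constructor <;> order) | (right; constructor <;> order)

namespace unitInterval

lemma coe_mem_uIcc {x a b : I} (h : x ∈ uIcc a b) : (x : ℝ) ∈ uIcc (a : ℝ) (b : ℝ) :=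
  image_subtype_val_uIcc a b ▸ mem_image_of_mem _ h

lemma dist_le_of_mem_uIcc {x y a b : I} (hx : x ∈ uIcc a b) (hy : y ∈ uIcc a b) :
    dist x y ≤ dist a b :=
  Real.dist_le_of_mem_uIcc (coe_mem_uIcc hx) (coe_mem_uIcc hy)

lemma dist_le_one (x y : I) : dist x y ≤ 1 := by
  have hI : ∀ z : I, z ∈ uIcc 0 1 := fun z => by
    rw [uIcc_of_le zero_le_one]
    exact ⟨nonneg', le_one'⟩
  simpa [Subtype.dist_eq] using dist_le_of_mem_uIcc (hI x) (hI y)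

lemma dist_add_dist_of_mem_uIcc {x y z : I} (h : y ∈ uIcc x z) :
    dist x y + dist y z = dist x z :=
  dist_add_dist_of_mem_segment (segment_eq_uIcc (x : ℝ) z ▸ coe_mem_uIcc h)

lemma dist_le_dist_of_mem_uIcc_inter {ι : Type*} [LinearOrder ι] {W : ι → I}
    (hW : Monotone W ∨ Antitone W) {i j m a b : ι} (hi : i ∈ uIcc m a ∩ uIcc m b)
    (hj : j ∈ uIcc m a ∩ uIcc m b) {y : I} (hy : y ∈ uIcc (W a) (W b)) :
    dist (W i) (W j) ≤ dist (W m) y := by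
  have hmaps : ∀ c d : ι, MapsTo W (uIcc c d) (uIcc (W c) (W d)) := fun _ _ =>
    hW.elim (fun h => h.mapsTo_uIcc) (fun h => h.mapsTo_uIcc)
  have hbetween : ∀ k ∈ uIcc m a ∩ uIcc m b, W k ∈ uIcc (W m) y := fun k hk =>
    mem_uIcc_of_mem_uIcc_of_mem_uIcc (hmaps _ _ hk.1) (hmaps _ _ hk.2) hy
  exact dist_le_of_mem_uIcc (hbetween i hi) (hbetween j hj)

end unitInterval

open unitInterval

noncomputable def orbitDistSum {X : Type*} [MetricSpace X] (f : X → X) (n : ℕ) (x₀ x : X) :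
    ℝ :=
  ∑ k ∈ Finset.range n, dist (f^[k] x₀) (f^[k] x)

lemma orbitDistSum_mem_Icc (f : I → I) (n : ℕ) (x₀ x : I) :
    orbitDistSum f n x₀ x ∈ Set.Icc 0 (n : ℝ) := by
  refine ⟨Finset.sum_nonneg fun _ _ => dist_nonneg, ?_⟩
  simpa [orbitDistSum] using
    Finset.sum_le_sum fun k (_ : k ∈ Finset.range n) => dist_le_one (f^[k] x₀) (f^[k] x)

/-- For monotone or antitone `f`, every `f^k x` lies between `f^k 0` and `f^k y` when `x ≤ y`,
so `Φ(y) - Φ(x) = ∑_{k < n} d(f^k x, f^k y)` for `Φ = orbitDistSum f n 0`. -/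
lemma dynDist_le_abs_sub_orbitDistSum {f : I → I} (hf : Monotone f ∨ Antitone f) (n : ℕ)
    (x y : I) : dynDist f n x y ≤ |orbitDistSum f n 0 x - orbitDistSum f n 0 y| := by
  wlog hxy : x ≤ y generalizing x y
  · rw [dynDist_comm, abs_sub_comm]
    exact this y x (le_of_not_ge hxy)
  have hx : x ∈ uIcc 0 y := by simp [uIcc_of_le, hxy]
  have hsplit : ∀ k, dist (f^[k] 0) (f^[k] y) =
      dist (f^[k] 0) (f^[k] x) + dist (f^[k] x) (f^[k] y) := fun k =>
    (dist_add_dist_of_mem_uIcc ((monotone_or_antitone_iterate hf k).elim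
      (fun h => h.mapsTo_uIcc hx) (fun h => h.mapsTo_uIcc hx))).symm
  have hdiff : orbitDistSum f n 0 y - orbitDistSum f n 0 x =
      ∑ k ∈ Finset.range n, dist (f^[k] x) (f^[k] y) := by
    simp only [orbitDistSum, hsplit, Finset.sum_add_distrib, add_sub_cancel_left]
  rw [abs_sub_comm, hdiff]
  exact (dynDist_le_sum_dist f n x y).trans (le_abs_self _)

/-- The witness is the clamp of `x` to `[[c, d]]`: `x` is its own clamp to `[[a, b]]`, and
`min`, `max` are `1`-Lipschitz for the sup metric. -/
lemma Real.exists_mem_uIcc_dist_le {a b c d x : ℝ} (hx : x ∈ uIcc a b) :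
    ∃ y ∈ uIcc c d, dist x y ≤ max (dist a c) (dist b d) := by
  rw [uIcc, mem_Icc] at hx
  refine ⟨max (c ⊓ d) (min x (c ⊔ d)),
    ⟨le_max_left _ _, max_le inf_le_sup (min_le_right _ _)⟩, ?_⟩
  have hclamp : x = max (a ⊓ b) (min x (a ⊔ b)) := by
    rw [min_eq_left hx.2, max_eq_right hx.1]
  rw [Real.dist_eq, Real.dist_eq, Real.dist_eq]
  calc |x - max (c ⊓ d) (min x (c ⊔ d))|
      = |max (a ⊓ b) (min x (a ⊔ b)) - max (c ⊓ d) (min x (c ⊔ d))| := by rw [← hclamp]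
    _ ≤ max |a ⊓ b - c ⊓ d| |min x (a ⊔ b) - min x (c ⊔ d)| := abs_max_sub_max_le_max _ _ _ _
    _ ≤ max |a - c| |b - d| := by
        refine max_le (abs_min_sub_min_le_max _ _ _ _) ?_
        refine (abs_min_sub_min_le_max _ _ _ _).trans (max_le (by simp) ?_)
        exact abs_max_sub_max_le_max _ _ _ _

lemma Real.hausdorffDist_uIcc_le (a b c d : ℝ) :
    Metric.hausdorffDist (uIcc a b) (uIcc c d) ≤ max (dist a c) (dist b d) := by
  refine Metric.hausdorffDist_le_of_mem_dist (le_max_of_le_left dist_nonneg)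
    (fun x hx => Real.exists_mem_uIcc_dist_le hx) fun x hx => ?_
  rw [dist_comm a, dist_comm b]
  exact Real.exists_mem_uIcc_dist_le hx

lemma TopologicalSpace.NonemptyCompacts.le_dist_of_mem {α : Type*} [MetricSpace α]
    {A B : NonemptyCompacts α} {p : α} {δ : ℝ} (hp : p ∈ A) (h : ∀ q ∈ B, δ ≤ dist p q) :
    δ ≤ dist A B :=
  ((Metric.le_infDist B.nonempty).2 h).trans <| Metric.infDist_le_hausdorffDist_of_mem hp <|
    Metric.hausdorffEDist_ne_top_of_nonempty_of_bounded A.nonempty B.nonempty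
      A.isCompact.isBounded B.isCompact.isBounded

def uIccSubcontinuum (a b : I) : Subcontinua I :=
  ⟨⟨⟨uIcc a b, isCompact_uIcc⟩, nonempty_uIcc⟩, ⟨nonempty_uIcc, isPreconnected_uIcc⟩⟩

@[simp]
lemma coe_uIccSubcontinuum (a b : I) : ((uIccSubcontinuum a b).1 : Set I) = uIcc a b := rfl

lemma Subcontinua.eq_uIccSubcontinuum (A : Subcontinua I) :
    A = uIccSubcontinuum (sInf (A.1 : Set I)) (sSup (A.1 : Set I)) := by
  have hA : (A.1 : Set I) = Icc (sInf (A.1 : Set I)) (sSup (A.1 : Set I)) :=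
    eq_Icc_of_connected_compact A.2 A.1.isCompact
  refine Subtype.ext (NonemptyCompacts.ext ?_)
  rw [coe_uIccSubcontinuum, uIcc_of_le (nonempty_Icc.1 (hA ▸ A.1.nonempty))]
  exact hA

lemma dist_uIccSubcontinuum_le (a b c d : I) :
    dist (uIccSubcontinuum a b) (uIccSubcontinuum c d) ≤ max (dist a c) (dist b d) := by
  change Metric.hausdorffDist (uIcc a b) (uIcc c d) ≤ _
  rw [← Metric.hausdorffDist_image isometry_subtype_coe, image_subtype_val_uIcc,
    image_subtype_val_uIcc]
  exact Real.hausdorffDist_uIcc_le _ _ _ _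

section InducedMap

variable {f : I → I} (hf : Continuous f)

lemma inducedC_uIccSubcontinuum (hmono : Monotone f ∨ Antitone f) (a b : I) :
    inducedC f hf (uIccSubcontinuum a b) = uIccSubcontinuum (f a) (f b) := by
  refine Subtype.ext (NonemptyCompacts.ext ?_)
  change f '' uIcc a b = uIcc (f a) (f b)
  rcases hmono with h | h
  exacts [hf.continuousOn.image_uIcc_of_monotoneOn (h.monotoneOn _),
    hf.continuousOn.image_uIcc_of_antitoneOn (h.antitoneOn _)]

lemma inducedC_iterate_uIccSubcontinuum (hmono : Monotone f ∨ Antitone f) (k : ℕ) (a b : I) :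
    (inducedC f hf)^[k] (uIccSubcontinuum a b) = uIccSubcontinuum (f^[k] a) (f^[k] b) := by
  induction k with
  | zero => rfl
  | succ k ih =>
    rw [Function.iterate_succ_apply', ih, inducedC_uIccSubcontinuum hf hmono,
      ← Function.iterate_succ_apply' f, ← Function.iterate_succ_apply' f]

lemma dynDist_inducedC_uIccSubcontinuum_le (hmono : Monotone f ∨ Antitone f) (n : ℕ)
    (a b c d : I) :
    dynDist (inducedC f hf) n (uIccSubcontinuum a b) (uIccSubcontinuum c d) ≤
      max (dynDist f n a c) (dynDist f n b d) := by
  refine dynDist_le_of_forall _ (le_max_of_le_left (dynDist_nonneg f n a c)) fun k hk => ?_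
  rw [inducedC_iterate_uIccSubcontinuum hf hmono, inducedC_iterate_uIccSubcontinuum hf hmono]
  exact (dist_uIccSubcontinuum_le _ _ _ _).trans
    (max_le_max (dist_iterate_le_dynDist f hk a c) (dist_iterate_le_dynDist f hk b d))

lemma card_le_of_isDynSeparated_inducedC (hmono : Monotone f ∨ Antitone f) {n : ℕ} {ε : ℝ}
    (hε : 0 < ε) (E : Finset (Subcontinua I)) (hE : IsDynSeparated (inducedC f hf) n ε E) :
    E.card ≤ (⌊n / ε⌋₊ + 1) ^ 2 := by
  set Φ := orbitDistSum f n 0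
  set lo : Subcontinua I → I := fun A => sInf (A.1 : Set I)
  set hi : Subcontinua I → I := fun A => sSup (A.1 : Set I)
  have h := card_le_pow_of_exists_le_abs_sub (E := E) (Ψ := fun A => ![Φ (lo A), Φ (hi A)])
    (a := n) hε (fun A _ => by
      simp only [Fin.forall_fin_two]
      exact ⟨orbitDistSum_mem_Icc f n 0 _, orbitDistSum_mem_Icc f n 0 _⟩) ?_
  · simpa using h
  intro A hA B hB hAB
  have hdyn := dynDist_inducedC_uIccSubcontinuum_le hf hmono n (lo A) (hi A) (lo B) (hi B)
  rw [← Subcontinua.eq_uIccSubcontinuum A, ← Subcontinua.eq_uIccSubcontinuum B] at hdyn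
  have hcode := (hE A hA B hB hAB).trans (hdyn.trans (max_le_max
    (dynDist_le_abs_sub_orbitDistSum hmono n _ _) (dynDist_le_abs_sub_orbitDistSum hmono n _ _)))
  rcases le_max_iff.1 hcode with h | h
  exacts [⟨0, by simpa using h⟩, ⟨1, by simpa using h⟩]

lemma polEnt_inducedC_le_two (hmono : Monotone f ∨ Antitone f) :
    polEnt (inducedC f hf) univ ≤ 2 := by
  refine polEnt_le_of_maxSep_le (d := 2) (fun ε hε => ⟨(ε⁻¹ + 1) ^ 2, ?_⟩)
  filter_upwards [eventually_ge_atTop 1] with n hn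
  have h : maxSep (inducedC f hf) univ n ε ≤ (⌊n / ε⌋₊ + 1) ^ 2 :=
    maxSep_le fun E _ hE => card_le_of_isDynSeparated_inducedC hf hmono hε E hE
  calc (maxSep (inducedC f hf) univ n ε : ℝ) ≤ ((⌊n / ε⌋₊ + 1 : ℕ) : ℝ) ^ 2 := by
        exact_mod_cast h
    _ ≤ (n / ε + 1) ^ 2 := by
        push_cast
        gcongr
        exact Nat.floor_le (by positivity)
    _ ≤ (ε⁻¹ + 1) ^ 2 * (n : ℝ) ^ 2 := by
        rw [← mul_pow, div_eq_mul_inv, add_mul, one_mul, mul_comm]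
        gcongr
        exact_mod_cast hn

section Orbit

variable {W : ℤ → I} {p : ℕ}

lemma le_dist_uIccSubcontinuum_of_mem (hW : Monotone W ∨ Antitone W) {A : Subcontinua I}
    {m a b : ℤ} (hm : W m ∈ (A.1 : Set I))
    (h : (m ≤ -1 ∧ 0 ≤ a ∧ 0 ≤ b) ∨ (0 ≤ m ∧ a ≤ -1 ∧ b ≤ -1)) :
    dist (W (-1)) (W 0) ≤ dist A (uIccSubcontinuum (W a) (W b)) := by
  refine NonemptyCompacts.le_dist_of_mem hm fun y hy => dist_le_dist_of_mem_uIcc_inter hW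
    ?_ ?_ hy <;> simp only [mem_inter_iff, mem_uIcc] <;> omega

lemma iterate_mul_orbit (horbit : ∀ m, f^[p] (W m) = W (m + 1)) (t : ℕ) (m : ℤ) :
    f^[p * t] (W m) = W (m + t) := by
  induction t with
  | zero => simp
  | succ t ih =>
    rw [Nat.mul_succ, add_comm, Function.iterate_add_apply, ih, horbit]
    push_cast
    ring_nf

lemma inducedC_iterate_orbit (hmono : Monotone f ∨ Antitone f)
    (horbit : ∀ m, f^[p] (W m) = W (m + 1)) (t : ℕ) (a b : ℤ) :
    (inducedC f hf)^[p * t] (uIccSubcontinuum (W a) (W b)) =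
      uIccSubcontinuum (W (a + t)) (W (b + t)) := by
  rw [inducedC_iterate_uIccSubcontinuum hf hmono, iterate_mul_orbit horbit,
    iterate_mul_orbit horbit]

/-- For `i < i'` the two subcontinua are told apart at time `p i`, when the first one reaches
`W 0`; for `i = i'`, `j < j'` at time `p (Q + j)`, when the first one has just crossed the gap. -/
lemma le_dynDist_orbit_family (hmono : Monotone f ∨ Antitone f) (hW : Monotone W ∨ Antitone W)
    (hp : 0 < p) (horbit : ∀ m, f^[p] (W m) = W (m + 1)) {n Q : ℕ} (hn : p * (2 * Q) ≤ n)
    {i j i' j' : ℕ} (hi : i < Q) (hj : j < Q) (hi' : i' < Q) (hj' : j' < Q)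
    (hne : (i, j) ≠ (i', j')) :
    dist (W (-1)) (W 0) ≤ dynDist (inducedC f hf) n
      (uIccSubcontinuum (W (-i)) (W (-(Q + j)))) (uIccSubcontinuum (W (-i')) (W (-(Q + j')))) := by
  wlog hlt : i < i' ∨ (i = i' ∧ j < j') generalizing i j i' j'
  · rw [dynDist_comm]
    exact this hi' hj' hi hj hne.symm (by
      simp only [ne_eq, Prod.mk.injEq] at hne
      omega)
  rcases hlt with hlt | ⟨rfl, hlt⟩
  · refine le_trans ?_ (dist_iterate_le_dynDist _ (k := p * i) (by nlinarith) _ _)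
    rw [inducedC_iterate_orbit hf hmono horbit, inducedC_iterate_orbit hf hmono horbit]
    exact le_dist_uIccSubcontinuum_of_mem hW (m := -i + i) left_mem_uIcc (by omega)
  · refine le_trans ?_ (dist_iterate_le_dynDist _ (k := p * (Q + j)) (by nlinarith) _ _)
    rw [inducedC_iterate_orbit hf hmono horbit, inducedC_iterate_orbit hf hmono horbit]
    exact (le_dist_uIccSubcontinuum_of_mem hW (m := -((Q : ℤ) + j') + ((Q + j : ℕ) : ℤ))
      right_mem_uIcc (by omega)).trans_eq (dist_comm _ _)

lemma two_le_polEnt_inducedC (hmono : Monotone f ∨ Antitone f) (hW : Monotone W ∨ Antitone W)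
    (hW₀ : W (-1) ≠ W 0) (hp : 0 < p) (horbit : ∀ m, f^[p] (W m) = W (m + 1)) :
    2 ≤ polEnt (inducedC f hf) univ := by
  have hδ : 0 < dist (W (-1)) (W 0) := dist_pos.2 hW₀
  have hp' : (0 : ℝ) < p := by exact_mod_cast hp
  refine le_polEnt_of_le_maxSep (d := 2) hδ (c := (4 * p : ℝ)⁻¹ ^ 2) (by positivity) ?_
  filter_upwards [eventually_ge_atTop (4 * p)] with n hn
  set Q := n / (2 * p)
  have hQn : p * (2 * Q) ≤ n := by
    rw [← mul_assoc, mul_comm, mul_comm p]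
    exact Nat.div_mul_le_self n (2 * p)
  have hcard : (Finset.range Q ×ˢ Finset.range Q).card ≤ maxSep (inducedC f hf) univ n _ :=
    card_le_maxSep (fun E _ hE => card_le_of_isDynSeparated_inducedC hf hmono hδ E hE)
      (φ := fun ij => uIccSubcontinuum (W (-ij.1)) (W (-(Q + ij.2)))) hδ (fun _ _ => trivial)
      (fun ij hij ij' hij' hne => by
        simp only [Finset.mem_product, Finset.mem_range] at hij hij'
        exact le_dynDist_orbit_family hf hmono hW hp horbit hQn hij.1 hij.2 hij'.1 hij'.2 hne)
  rw [Finset.card_product, Finset.card_range, ← sq] at hcard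
  have hQ : (n : ℝ) < Q * (2 * p) + 2 * p := by
    exact_mod_cast Nat.lt_div_mul_add (by positivity : 0 < 2 * p)
  have hn' : (4 * p : ℝ) ≤ n := by exact_mod_cast hn
  calc (4 * p : ℝ)⁻¹ ^ 2 * (n : ℝ) ^ 2 = ((4 * p : ℝ)⁻¹ * n) ^ 2 := by ring
    _ ≤ (Q : ℝ) ^ 2 := by
        gcongr
        rw [inv_mul_le_iff₀ (by positivity)]
        nlinarith
    _ ≤ _ := by exact_mod_cast hcard

end Orbit

end InducedMap

lemma mem_nonWandering_of_isPeriodicPt {X : Type*} [TopologicalSpace X] {f : X → X} {p : ℕ}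
    {x : X} (hp : 0 < p) (hx : Function.IsPeriodicPt f p x) : x ∈ nonWandering f :=
  fun _ hU => ⟨p, hp, x, ⟨x, mem_of_mem_nhds hU, hx⟩, mem_of_mem_nhds hU⟩

lemma OrderIso.monotone_or_antitone_zpow_apply {α : Type*} [LinearOrder α] (e : α ≃o α)
    (x : α) : Monotone (fun m : ℤ => (e ^ m) x) ∨ Antitone (fun m : ℤ => (e ^ m) x) := by
  have hstep : ∀ m : ℤ, (e ^ (m + 1)) x = (e ^ m) (e x) := fun m => by
    rw [zpow_add_one, RelIso.mul_apply]
  rcases le_total x (e x) with h | h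
  · exact Or.inl (monotone_int_of_le_succ fun m => hstep m ▸ (e ^ m).monotone h)
  · exact Or.inr (antitone_int_of_succ_le fun m => hstep m ▸ (e ^ m).monotone h)

theorem stmt0 (f : ↥unitInterval ≃ₜ ↥unitInterval) (hNW : (nonWandering ⇑f).Finite) :
    polEnt (inducedC ⇑f f.continuous) Set.univ = 2 := by
  have hstrict : StrictMono f ∨ StrictAnti f := f.continuous.strictMono_of_inj f.injective
  have hmono : Monotone f ∨ Antitone f := hstrict.imp StrictMono.monotone StrictAnti.antitone
  have : Infinite I := Set.infinite_coe_iff.2 (Set.Icc_infinite zero_lt_one)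
  obtain ⟨x, -, hx⟩ := Set.infinite_univ.exists_notMem_finite hNW
  let e : I ≃o I := StrictMono.orderIsoOfSurjective (f^[2])
    (hstrict.elim (fun h => h.iterate 2) fun h => h.comp h) (f.surjective.iterate 2)
  have he : ∀ y, e y = f^[2] y := fun _ => rfl
  have horbit : ∀ m : ℤ, f^[2] ((e ^ m) x) = (e ^ (m + 1)) x := fun m => by
    rw [add_comm, zpow_one_add, RelIso.mul_apply, he]
  have hW₀ : (e ^ (-1 : ℤ)) x ≠ (e ^ (0 : ℤ)) x := fun h => by
    refine hx (mem_nonWandering_of_isPeriodicPt two_pos ?_)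
    rw [zpow_neg_one, zpow_zero, RelIso.one_apply] at h
    rw [Function.IsPeriodicPt, Function.IsFixedPt, ← he, ← h, RelIso.apply_inv_self, h]
  exact le_antisymm (polEnt_inducedC_le_two _ hmono) (two_le_polEnt_inducedC _ hmono
    (e.monotone_or_antitone_zpow_apply x) hW₀ two_pos horbit)
end

section
/- Let f : [0,1] → [0,1] be a homeomorphism whose set of non-wandering points is finite. Then the polynomial entropy of the induced map 2^f on the hyperspace 2^{[0,1]} of nonempty closed subsets of [0,1] is infinite. -/
open Filter Topology TopologicalSpace Set
open scoped ENNReal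

section MyAux
variable {X : Type*} [MetricSpace X]

lemma myDynDist_le {f : X → X} {n : ℕ} {x y : X} {D : ℝ} (hD : 0 ≤ D)
    (h : ∀ k, k < n → dist (f^[k] x) (f^[k] y) ≤ D) : dynDist f n x y ≤ D := by
  rw [dynDist, ← Real.coe_toNNReal D hD, NNReal.coe_le_coe]
  refine Finset.sup_le fun k hk => ?_
  rw [← NNReal.coe_le_coe, Real.coe_toNNReal D hD, coe_nndist]
  exact h k (Finset.mem_range.1 hk)

lemma myLe_dynDist {f : X → X} {n k : ℕ} (hk : k < n) (x y : X) :
    dist (f^[k] x) (f^[k] y) ≤ dynDist f n x y := by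
  rw [← coe_nndist]
  exact NNReal.coe_le_coe.2
    (Finset.le_sup (f := fun k => nndist (f^[k] x) (f^[k] y)) (Finset.mem_range.2 hk))

lemma myDynDist_comm (f : X → X) (n : ℕ) (x y : X) :
    dynDist f n x y = dynDist f n y x := by
  unfold dynDist
  congr 1
  exact Finset.sup_congr rfl fun k _ => nndist_comm _ _

lemma myBddAbove [CompactSpace X] (f : X → X) (n : ℕ) {ε : ℝ} (hε : 0 < ε) :
    BddAbove {m : ℕ | ∃ E : Finset X, ↑E ⊆ (Set.univ : Set X) ∧ E.card = m ∧
      IsDynSeparated f n ε E} := by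
  classical
  obtain ⟨t, -, htf, htc⟩ :=
    finite_cover_balls_of_compact (isCompact_univ (X := Fin n → X)) (e := ε/2) (by positivity)
  refine ⟨htf.toFinset.card, ?_⟩
  rintro m ⟨E, -, rfl, hsep⟩
  by_contra hlt
  push_neg at hlt
  set Φ : X → (Fin n → X) := fun x k => f^[(k : ℕ)] x with hΦ
  have hmap : ∀ x : X, ∃ c, c ∈ htf.toFinset ∧ Φ x ∈ Metric.ball c (ε/2) := by
    intro x
    have h1 := htc (mem_univ (Φ x))
    simp only [Set.mem_iUnion] at h1
    obtain ⟨c, hc, hcb⟩ := h1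
    exact ⟨c, htf.mem_toFinset.2 hc, hcb⟩
  obtain ⟨x, hx, y, hy, hxy, hcx⟩ :=
    Finset.exists_ne_map_eq_of_card_lt_of_maps_to hlt
      (fun x _ => (hmap x).choose_spec.1)
  have h2 : dist (Φ x) (Φ y) < ε := by
    calc dist (Φ x) (Φ y) ≤ dist (Φ x) ((hmap x).choose) + dist (Φ y) ((hmap y).choose) := by
          rw [hcx]; exact dist_triangle_right _ _ _
    _ < ε/2 + ε/2 := by
          exact add_lt_add (hmap x).choose_spec.2 (hmap y).choose_spec.2
    _ = ε := by ring
  have h3 : dynDist f n x y ≤ dist (Φ x) (Φ y) := by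
    refine myDynDist_le dist_nonneg fun k hk => ?_
    exact dist_le_pi_dist (Φ x) (Φ y) (⟨k, hk⟩ : Fin n)
  exact absurd (hsep x hx y hy hxy) (by linarith)

end MyAux

-- STATEMENT 2

theorem stmt2 (f : ↥unitInterval ≃ₜ ↥unitInterval) (hNW : (nonWandering ⇑f).Finite) :
    polEnt (induced2 ⇑f f.continuous) Set.univ = ⊤ := by
  classical
  set X := ↥unitInterval
  set g : X → X := ⇑f with hg
  set F : NonemptyCompacts X → NonemptyCompacts X := induced2 g f.continuous with hF
  -- a wandering point
  haveI : Infinite X := Set.infinite_coe_iff.2 (Set.Icc_infinite (by norm_num))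
  obtain ⟨a, ha⟩ : ∃ a : X, a ∉ nonWandering g := hNW.infinite_compl.nonempty
  rw [nonWandering, mem_setOf_eq] at ha
  push_neg at ha
  obtain ⟨U, hU, hUw⟩ := ha
  obtain ⟨r, hr, hball⟩ := Metric.mem_nhds_iff.1 hU
  have haU : a ∈ U := mem_of_mem_nhds hU
  -- backward orbit
  set b : ℕ → X := fun k => (⇑f.symm)^[k] a with hb
  have hLI : ∀ (j : ℕ) (x : X), g^[j] ((⇑f.symm)^[j] x) = x := fun j x =>
    (Function.LeftInverse.iterate (fun y => f.apply_symm_apply y) j) x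
  have hfb : ∀ k : ℕ, g^[k] (b k) = a := fun k => hLI k a
  have hforward : ∀ j, 1 ≤ j → g^[j] a ∉ U := by
    intro j hj h
    have hmem : g^[j] a ∈ (g^[j] '' U ∩ U) := ⟨⟨a, haU, rfl⟩, h⟩
    rw [hUw j hj] at hmem
    exact hmem
  have hbackward : ∀ j, 1 ≤ j → b j ∉ U := by
    intro j hj h
    have hmem : a ∈ (g^[j] '' U ∩ U) := ⟨⟨b j, h, hfb j⟩, haU⟩
    rw [hUw j hj] at hmem
    exact hmem
  have hnotU : ∀ y : X, y ∉ U → r ≤ dist a y := by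
    intro y hy
    by_contra h
    push_neg at h
    exact hy (hball (by rwa [Metric.mem_ball, dist_comm]))
  have hdist : ∀ m k : ℕ, m ≠ k → r ≤ dist a (g^[m] (b k)) := by
    intro m k hmk
    rcases lt_or_gt_of_ne hmk with hlt | hlt
    · -- m < k : g^[m] (b k) = b (k - m)
      have hkm : b k = (⇑f.symm)^[m] (b (k - m)) := by
        rw [hb]
        simp only []
        rw [← Function.iterate_add_apply, Nat.add_sub_cancel' hlt.le]
      have : g^[m] (b k) = b (k - m) := by rw [hkm, hLI]
      rw [this]
      exact hnotU _ (hbackward (k - m) (by omega))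
    · -- k < m : g^[m] (b k) = g^[m - k] a
      have : g^[m] (b k) = g^[m - k] a := by
        conv_lhs => rw [← Nat.sub_add_cancel hlt.le, Function.iterate_add_apply, hfb]
      rw [this]
      exact hnotU _ (hforward (m - k) (by omega))
  have hbinj : Function.Injective b := by
    intro j k hjk
    by_contra hne
    rcases lt_or_gt_of_ne hne with hlt | hlt
    · have : g^[j] (b k) = b (k - j) := by
        have hkm : b k = (⇑f.symm)^[j] (b (k - j)) := by
          rw [hb]; simp only []
          rw [← Function.iterate_add_apply, Nat.add_sub_cancel' hlt.le]
        rw [hkm, hLI]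
      have h0 : a = b (k - j) := by rw [← hfb j, hjk, this]
      have := hdist 0 (k - j) (by omega)
      simp only [Function.iterate_zero, id_eq, ← h0, dist_self] at this
      linarith
    · have : g^[k] (b j) = b (j - k) := by
        have hkm : b j = (⇑f.symm)^[k] (b (j - k)) := by
          rw [hb]; simp only []
          rw [← Function.iterate_add_apply, Nat.add_sub_cancel' hlt.le]
        rw [hkm, hLI]
      have h0 : a = b (j - k) := by rw [← hfb k, ← hjk, this]
      have := hdist 0 (j - k) (by omega)
      simp only [Function.iterate_zero, id_eq, ← h0, dist_self] at this
      linarith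
  -- iterates of the induced map
  have hiter : ∀ (m : ℕ) (B : NonemptyCompacts X), ((F^[m] B : NonemptyCompacts X) : Set X)
      = g^[m] '' (B : Set X) := by
    intro m
    induction m with
    | zero => intro B; simp
    | succ m ih =>
      intro B
      rw [Function.iterate_succ_apply', Function.iterate_succ']
      have : ((F (F^[m] B) : NonemptyCompacts X) : Set X) = g '' ((F^[m] B : NonemptyCompacts X) : Set X) := rfl
      rw [this, ih, Set.image_image]
      rfl
  -- key counting bound
  have hkey : ∀ n : ℕ, (2 : ℕ) ^ n ≤ maxSep F Set.univ n r := by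
    intro n
    -- the family of finite sets
    have hAfin : ∀ S : Finset ℕ, (b '' (insert n (↑S : Set ℕ))).Finite :=
      fun S => (S.finite_toSet.insert n).image b
    set A : Finset ℕ → NonemptyCompacts X := fun S =>
      ⟨⟨b '' (insert n (↑S : Set ℕ)), (hAfin S).isCompact⟩,
        ⟨b n, Set.mem_image_of_mem b (Set.mem_insert n _)⟩⟩ with hA
    have hAcoe : ∀ S : Finset ℕ, ((A S : NonemptyCompacts X) : Set X) = b '' (insert n (↑S : Set ℕ)) :=
      fun S => rfl
    -- separation helper
    have hsep2 : ∀ S T : Finset ℕ, T ⊆ Finset.range n → ∀ k0, k0 ∈ S → k0 ∉ T → k0 < n →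
        r ≤ dynDist F n (A S) (A T) := by
      intro S T hT k0 hk0S hk0T hk0n
      refine le_trans ?_ (myLe_dynDist hk0n (A S) (A T))
      rw [Metric.NonemptyCompacts.dist_eq, hiter, hiter, hAcoe, hAcoe]
      set s : Set X := g^[k0] '' (b '' (insert n (↑S : Set ℕ))) with hs
      set t : Set X := g^[k0] '' (b '' (insert n (↑T : Set ℕ))) with ht
      have has : a ∈ s := by
        refine ⟨b k0, Set.mem_image_of_mem b (Set.mem_insert_of_mem _ hk0S), hfb k0⟩
      have htne : t.Nonempty := ⟨g^[k0] (b n), Set.mem_image_of_mem _ (Set.mem_image_of_mem b (Set.mem_insert n _))⟩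
      have hinf : r ≤ Metric.infDist a t := by
        by_contra h
        push_neg at h
        obtain ⟨y, hyt, hylt⟩ := (Metric.infDist_lt_iff htne).1 h
        obtain ⟨z, hz, rfl⟩ := hyt
        obtain ⟨k, hk, rfl⟩ := hz
        have hknek0 : k0 ≠ k := by
          rcases hk with hk | hk
          · subst hk; omega
          · intro hkk; exact hk0T (hkk ▸ hk)
        exact absurd hylt (not_lt.2 (hdist k0 k hknek0))
      have hfin : EMetric.hausdorffEdist s t ≠ ⊤ :=
        Metric.hausdorffEdist_ne_top_of_nonempty_of_bounded ⟨a, has⟩ htne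
          (((hAfin S).image _).isBounded) (((hAfin T).image _).isBounded)
      exact le_trans hinf (Metric.infDist_le_hausdorffDist_of_mem has hfin)
    -- injectivity of A on subsets of range n
    have hAinj : ∀ S ∈ (Finset.range n).powerset, ∀ T ∈ (Finset.range n).powerset,
        A S = A T → S = T := by
      intro S hS T hT hST
      have hco : b '' (insert n (↑S : Set ℕ)) = b '' (insert n (↑T : Set ℕ)) := by
        have := congrArg (fun B : NonemptyCompacts X => (B : Set X)) hST
        simpa [hAcoe] using this
      have hins : insert n (↑S : Set ℕ) = insert n (↑T : Set ℕ) :=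
        (Set.image_injective.2 hbinj) hco
      rw [Finset.mem_powerset] at hS hT
      ext k
      constructor
      · intro hkS
        have hkn : k < n := Finset.mem_range.1 (hS hkS)
        have : (k : ℕ) ∈ insert n (↑T : Set ℕ) := hins ▸ Set.mem_insert_of_mem _ hkS
        rcases this with h | h
        · omega
        · exact h
      · intro hkT
        have hkn : k < n := Finset.mem_range.1 (hT hkT)
        have : (k : ℕ) ∈ insert n (↑S : Set ℕ) := hins ▸ Set.mem_insert_of_mem _ hkT
        rcases this with h | h
        · omega
        · exact h
    set E : Finset (NonemptyCompacts X) := (Finset.range n).powerset.image A with hE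
    have hEcard : E.card = 2 ^ n := by
      rw [hE, Finset.card_image_of_injOn hAinj, Finset.card_powerset, Finset.card_range]
    have hEsep : IsDynSeparated F n r E := by
      intro x hx y hy hxy
      obtain ⟨S, hS, rfl⟩ := Finset.mem_image.1 hx
      obtain ⟨T, hT, rfl⟩ := Finset.mem_image.1 hy
      have hSTne : S ≠ T := fun h => hxy (by rw [h])
      by_cases hST : ∃ k0, k0 ∈ S ∧ k0 ∉ T
      · obtain ⟨k0, hk0S, hk0T⟩ := hST
        exact hsep2 S T (Finset.mem_powerset.1 hT) k0 hk0S hk0T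
          (Finset.mem_range.1 (Finset.mem_powerset.1 hS hk0S))
      · push_neg at hST
        have hsub : S ⊆ T := fun k hk => hST k hk
        obtain ⟨k0, hk0T, hk0S⟩ : ∃ k0, k0 ∈ T ∧ k0 ∉ S := by
          by_contra h
          push_neg at h
          exact hSTne (Finset.Subset.antisymm hsub h)
        rw [myDynDist_comm]
        exact hsep2 T S (Finset.mem_powerset.1 hS) k0 hk0T hk0S
          (Finset.mem_range.1 (Finset.mem_powerset.1 hT hk0T))
    exact le_csSup (myBddAbove F n hr) ⟨E, Set.subset_univ _, hEcard, hEsep⟩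
  -- conclude
  have hgrow : ∀ n : ℕ, 2 ≤ n →
      (n : ℝ) * Real.log 2 / Real.log n ≤ Real.log (maxSep F Set.univ n r) / Real.log n := by
    intro n hn
    have hlogn : 0 < Real.log n := Real.log_pos (by exact_mod_cast hn)
    have h1 : ((2 : ℝ) ^ n) ≤ (maxSep F Set.univ n r : ℝ) := by
      have := hkey n
      calc ((2 : ℝ) ^ n) = ((2 ^ n : ℕ) : ℝ) := by push_cast; ring
      _ ≤ _ := by exact_mod_cast this
    have h2 : (n : ℝ) * Real.log 2 ≤ Real.log (maxSep F Set.univ n r) := by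
      rw [← Real.log_pow]
      exact Real.log_le_log (by positivity) h1
    exact div_le_div_of_nonneg_right h2 hlogn.le
  have htend : Tendsto (fun n : ℕ => (n : ℝ) * Real.log 2 / Real.log n) atTop atTop := by
    have h1 : Tendsto (fun x : ℝ => Real.log x / x) atTop (nhds 0) :=
      Real.isLittleO_log_id_atTop.tendsto_div_nhds_zero
    have h2 : Tendsto (fun x : ℝ => Real.log x / x) atTop (nhdsWithin 0 (Set.Ioi 0)) := by
      refine tendsto_nhdsWithin_of_tendsto_nhds_of_eventually_within _ h1 ?_
      filter_upwards [Filter.eventually_ge_atTop (2 : ℝ)] with x hx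
      have : 0 < Real.log x := Real.log_pos (by linarith)
      exact div_pos this (by linarith)
    have h3 : Tendsto (fun x : ℝ => x / Real.log x) atTop atTop := by
      have h := h2.inv_tendsto_nhdsGT_zero
      refine h.congr fun x => ?_
      simp [Pi.inv_apply, inv_div]
    have h4 : Tendsto (fun n : ℕ => (n : ℝ) / Real.log n) atTop atTop :=
      h3.comp tendsto_natCast_atTop_atTop
    have h5 : Tendsto (fun n : ℕ => Real.log 2 * ((n : ℝ) / Real.log n)) atTop atTop :=
      h4.const_mul_atTop (Real.log_pos (by norm_num))
    refine h5.congr fun n => by ring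
  have hlimtop : Filter.atTop.limsup
      (fun n : ℕ => ENNReal.ofReal (Real.log (maxSep F Set.univ n r) / Real.log n)) = ⊤ := by
    have hlow : Tendsto (fun n : ℕ => ENNReal.ofReal ((n : ℝ) * Real.log 2 / Real.log n))
        atTop (nhds ⊤) := ENNReal.tendsto_ofReal_atTop.comp htend
    have hlowlim := hlow.limsup_eq
    rw [eq_top_iff, ← hlowlim]
    refine Filter.limsup_le_limsup ?_
    filter_upwards [Filter.eventually_ge_atTop 2] with n hn
    exact ENNReal.ofReal_le_ofReal (hgrow n hn)
  rw [eq_top_iff, polEnt]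
  exact le_trans (le_of_eq hlimtop.symm) (le_iSup_of_le r (le_iSup_of_le hr le_rfl))
end

section
/- Let f be a continuous self-map of a compact metric space X with finitely many non-wandering points, and let Y ⊆ X be an f-invariant set containing exactly one non-wandering point. Then the polynomial entropy h_pol(f;Y) is bounded from above by the maximal cardinality of a singular set contained in the closure of Y. -/
open Filter Topology TopologicalSpace Set
open scoped ENNReal

/-!
Fix `ε > 0`. For small `δ`, the `δ`-balls around the finitely many non-wandering points and
finitely many small closed wandering sets covering the rest of `X` are cells of diameter `< ε`;
label each point by a cell containing it. Along an orbit, two consecutive ball letters `p, q`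
force `q = f p`, and each wandering cell is visited at most once. If no singular set in
`closure Y` has more than `L` points, then among any `L + 1` visits of an orbit of `Y` to the
wandering cells two lie within a bounded time `M` of each other: otherwise compactness yields
`L + 1` mutually singular limit points. So the wandering visits of an itinerary of length `n` lie
in at most `L` windows of bounded length, the itinerary is determined by these visits and the
letters right after them, and there are `O(n ^ L)` itineraries. Points with the same itinerary
are not `(n, ε)`-separated, hence `S(n, ε; Y) = O(n ^ L)` and `h_pol(f; Y) ≤ L`.
-/

theorem Finset.exists_cluster_starts (P : Finset ℕ) (M L : ℕ)
    (hP : ∀ t : Fin (L + 1) → ℕ, (∀ i, t i ∈ P) → ∃ i j, i ≠ j ∧ |(t i : ℤ) - t j| ≤ M) :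
    ∃ S ⊆ P, S.card ≤ L ∧ ∀ p ∈ P, ∃ a ∈ S, a ≤ p ∧ p ≤ a + M * P.card := by
  set S := P.filter fun p => ∀ s ∈ P, s < p → s + M < p
  have hgap : ∀ a ∈ S, ∀ b ∈ S, a < b → a + M < b := fun a ha b hb hab =>
    (Finset.mem_filter.1 hb).2 a (Finset.mem_filter.1 ha).1 hab
  have hchain : ∀ p ∈ P, ∃ a ∈ S, a ≤ p ∧ p ≤ a + M * (P.filter (· < p)).card := by
    intro p
    induction p using Nat.strong_induction_on with
    | _ p ih =>
      intro hp
      by_cases hstart : ∀ s ∈ P, s < p → s + M < p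
      · exact ⟨p, Finset.mem_filter.2 ⟨hp, hstart⟩, le_rfl, Nat.le_add_right _ _⟩
      push Not at hstart
      obtain ⟨s, hs, hsp, hps⟩ := hstart
      obtain ⟨a, ha, has, hsa⟩ := ih s hsp hs
      have hcard : (P.filter (· < s)).card < (P.filter (· < p)).card :=
        Finset.card_lt_card <| (Finset.ssubset_iff_of_subset fun x hx =>
          Finset.mem_filter.2 ⟨(Finset.mem_filter.1 hx).1, (Finset.mem_filter.1 hx).2.trans hsp⟩).2
          ⟨s, Finset.mem_filter.2 ⟨hs, hsp⟩, by simp⟩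
      refine ⟨a, ha, has.trans hsp.le, ?_⟩
      nlinarith
  refine ⟨S, Finset.filter_subset _ _, ?_, fun p hp => ?_⟩
  · by_contra! hL
    let e := S.orderEmbOfCardLe hL
    have he : ∀ i, e i ∈ S := S.orderEmbOfCardLe_mem hL
    obtain ⟨i, j, hij, hle⟩ := hP (fun i => e i) fun i => Finset.filter_subset _ _ (he i)
    rw [abs_le] at hle
    rcases lt_or_gt_of_ne (e.injective.ne hij) with h | h
    · have := hgap _ (he i) _ (he j) h; omega
    · have := hgap _ (he j) _ (he i) h; omega
  · obtain ⟨a, ha, hap, hpa⟩ := hchain p hp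
    exact ⟨a, ha, hap, hpa.trans (by gcongr; exact Finset.filter_subset _ _)⟩

section Itinerary

variable {β J : Type*} [DecidableEq β] [DecidableEq J]

def letterPositions (u : ℕ → β ⊕ J) (n : ℕ) (j : J) : Finset ℕ :=
  (Finset.range n).filter (u · = .inr j)

theorem mem_letterPositions {u : ℕ → β ⊕ J} {n t : ℕ} {j : J} :
    t ∈ letterPositions u n j ↔ t < n ∧ u t = .inr j := by
  simp [letterPositions]

def itineraryCode (u : ℕ → β ⊕ J) (n : ℕ) :
    (β ⊕ J) × (J → Finset ℕ) × (J → Finset (β ⊕ J)) :=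
  (u 0, letterPositions u n, fun j => (letterPositions u n j).image fun t => u (t + 1))

-- Between two letters of `J` a word follows the orbit of `g`.
theorem eq_of_itineraryCode_eq {g : β → β} {u v : ℕ → β ⊕ J} {n : ℕ}
    (hu : ∀ t b b', u t = .inl b → u (t + 1) = .inl b' → b' = g b)
    (hv : ∀ t b b', v t = .inl b → v (t + 1) = .inl b' → b' = g b)
    (hv_once : ∀ t t' j, v t = .inr j → v t' = .inr j → t = t')
    (h : itineraryCode u n = itineraryCode v n) : ∀ t < n, u t = v t := by
  simp only [itineraryCode, Prod.mk.injEq] at h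
  obtain ⟨h0, hpos, hnext⟩ := h
  have hJ : ∀ t < n, ∀ j, u t = .inr j ↔ v t = .inr j := fun t ht j => by
    simpa [mem_letterPositions, ht] using Finset.ext_iff.1 (congrFun hpos j) t
  intro t
  induction t with
  | zero => exact fun _ => h0
  | succ t ih =>
    intro ht
    rcases hu1 : u (t + 1) with b | j
    · rcases hv1 : v (t + 1) with b' | j'
      · rcases hut : u t with c | j
        · rw [hu t c b hut hu1, hv t c b' ((ih (by omega)).symm ▸ hut) hv1]
        · have hmem : u (t + 1) ∈ (letterPositions v n j).image fun s => v (s + 1) := by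
            rw [← congrFun hnext j]
            exact Finset.mem_image_of_mem _ (mem_letterPositions.2 ⟨by omega, hut⟩)
          obtain ⟨s, hs, hsv⟩ := Finset.mem_image.1 hmem
          have hst := hv_once s t j (mem_letterPositions.1 hs).2 ((hJ t (by omega) j).1 hut)
          rw [← hu1, ← hv1, ← hsv, hst]
      · exact absurd ((hJ _ ht j').2 hv1) (by rw [hu1]; simp)
    · exact ((hJ _ ht j).1 hu1).symm

end Itinerary

section ItineraryCount

variable {β J : Type*} [Fintype β] [Fintype J] [DecidableEq J]

def smallSubsets (L n : ℕ) : Finset (Finset ℕ) :=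
  (Finset.range n).powerset.filter (·.card ≤ L)

theorem card_smallSubsets_le (L n : ℕ) : (smallSubsets L n).card ≤ (L + 1) * (n + 1) ^ L := by
  have hsub : smallSubsets L n ⊆
      (Finset.range (L + 1)).biUnion fun k => (Finset.range n).powersetCard k := by
    intro S hS
    obtain ⟨hSn, hSL⟩ := Finset.mem_filter.1 hS
    exact Finset.mem_biUnion.2 ⟨S.card, Finset.mem_range.2 (Nat.lt_succ_of_le hSL),
      Finset.mem_powersetCard.2 ⟨Finset.mem_powerset.1 hSn, rfl⟩⟩
  calc (smallSubsets L n).card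
      ≤ ∑ k ∈ Finset.range (L + 1), ((Finset.range n).powersetCard k).card :=
        (Finset.card_le_card hsub).trans Finset.card_biUnion_le
    _ ≤ ∑ _k ∈ Finset.range (L + 1), (n + 1) ^ L := by
        refine Finset.sum_le_sum fun k hk => ?_
        rw [Finset.card_powersetCard, Finset.card_range]
        calc n.choose k ≤ n ^ k := Nat.choose_le_pow n k
          _ ≤ (n + 1) ^ k := Nat.pow_le_pow_left n.le_succ k
          _ ≤ (n + 1) ^ L :=
            Nat.pow_le_pow_right n.succ_pos (Nat.lt_succ_iff.1 (Finset.mem_range.1 hk))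
    _ = (L + 1) * (n + 1) ^ L := by simp

-- Position `0` is kept apart: the gap bound only concerns visits at positive times.
def clusterSupport (D : ℕ) (S : Finset ℕ) : Finset ℕ :=
  insert 0 (S.biUnion fun a => Finset.Icc a (a + D))

theorem card_clusterSupport_le (D : ℕ) (S : Finset ℕ) :
    (clusterSupport D S).card ≤ 1 + S.card * (D + 1) := by
  calc (clusterSupport D S).card ≤ (S.biUnion fun a => Finset.Icc a (a + D)).card + 1 :=
        Finset.card_insert_le _ _
    _ ≤ (∑ a ∈ S, (Finset.Icc a (a + D)).card) + 1 := by gcongr; exact Finset.card_biUnion_le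
    _ = (∑ _a ∈ S, (D + 1)) + 1 := by
        congr 1; exact Finset.sum_congr rfl fun a _ => by rw [Nat.card_Icc]; omega
    _ = 1 + S.card * (D + 1) := by rw [Finset.sum_const, smul_eq_mul, add_comm]

variable (J) in
def positionFamilies (D L n : ℕ) : Finset (J → Finset ℕ) :=
  (smallSubsets L n).biUnion fun S => Fintype.piFinset fun _ => (clusterSupport D S).powerset

theorem card_positionFamilies_le (D L n : ℕ) : (positionFamilies J D L n).card ≤
    (L + 1) * (n + 1) ^ L * (2 ^ (1 + L * (D + 1))) ^ Fintype.card J := by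
  calc (positionFamilies J D L n).card
      ≤ (smallSubsets L n).card * (2 ^ (1 + L * (D + 1))) ^ Fintype.card J := by
        refine Finset.card_biUnion_le_card_mul _ _ _ fun S hS => ?_
        rw [Fintype.card_piFinset, Finset.prod_const, Finset.card_univ, Finset.card_powerset]
        gcongr
        · norm_num
        · exact (card_clusterSupport_le D S).trans (by gcongr; exact (Finset.mem_filter.1 hS).2)
    _ ≤ _ := by gcongr; exact card_smallSubsets_le L n

variable (β J) in
def itineraryCodes (D L n : ℕ) : Finset ((β ⊕ J) × (J → Finset ℕ) × (J → Finset (β ⊕ J))) :=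
  Finset.univ ×ˢ positionFamilies J D L n ×ˢ Finset.univ

theorem exists_card_itineraryCodes_le (D L : ℕ) :
    ∃ c, ∀ n, (itineraryCodes β J D L n).card ≤ c * (n + 1) ^ L := by
  refine ⟨Fintype.card (β ⊕ J) * ((L + 1) * (2 ^ (1 + L * (D + 1))) ^ Fintype.card J) *
    Fintype.card (J → Finset (β ⊕ J)), fun n => ?_⟩
  simp only [itineraryCodes, Finset.card_product, Finset.card_univ]
  calc _ ≤ Fintype.card (β ⊕ J) *
        ((L + 1) * (n + 1) ^ L * (2 ^ (1 + L * (D + 1))) ^ Fintype.card J *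
        Fintype.card (J → Finset (β ⊕ J))) :=
          Nat.mul_le_mul_left _ (Nat.mul_le_mul_right _ (card_positionFamilies_le D L n))
    _ = _ := by ring

theorem itineraryCode_mem_itineraryCodes [DecidableEq β] {u : ℕ → β ⊕ J} {M L : ℕ} (n : ℕ)
    (honce : ∀ t t' j, u t = .inr j → u t' = .inr j → t = t')
    (hfar : ∀ t : Fin (L + 1) → ℕ, (∀ i, 1 ≤ t i ∧ ∃ j, u (t i) = .inr j) →
      ∃ i j, i ≠ j ∧ |(t i : ℤ) - t j| ≤ M) :
    itineraryCode u n ∈ itineraryCodes β J (M * Fintype.card J) L n := by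
  set Q := (Finset.range n).filter fun t => 1 ≤ t ∧ ∃ j, u t = .inr j
  have hQ : Q.card ≤ Fintype.card J :=
    calc Q.card ≤ (Finset.univ.biUnion (letterPositions u n)).card := by
          refine Finset.card_le_card fun t ht => ?_
          obtain ⟨htn, -, j, hj⟩ := Finset.mem_filter.1 ht
          exact Finset.mem_biUnion.2 ⟨j, Finset.mem_univ _,
            mem_letterPositions.2 ⟨Finset.mem_range.1 htn, hj⟩⟩
      _ ≤ ∑ j, (letterPositions u n j).card := Finset.card_biUnion_le
      _ ≤ ∑ _j : J, 1 := Finset.sum_le_sum fun j _ => Finset.card_le_one.2 fun a ha b hb =>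
          honce a b j (mem_letterPositions.1 ha).2 (mem_letterPositions.1 hb).2
      _ = Fintype.card J := by simp
  obtain ⟨S, hSQ, hSL, hcover⟩ := Q.exists_cluster_starts M L fun t ht =>
    hfar t fun i => (Finset.mem_filter.1 (ht i)).2
  refine Finset.mem_product.2 ⟨Finset.mem_univ _, Finset.mem_product.2
    ⟨Finset.mem_biUnion.2 ⟨S, ?_, Fintype.mem_piFinset.2 fun j =>
      Finset.mem_powerset.2 fun t ht => ?_⟩, Finset.mem_univ _⟩⟩
  · exact Finset.mem_filter.2
      ⟨Finset.mem_powerset.2 (hSQ.trans (Finset.filter_subset _ _)), hSL⟩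
  · obtain ⟨htn, hj⟩ := mem_letterPositions.1 ht
    rcases Nat.eq_zero_or_pos t with rfl | ht1
    · exact Finset.mem_insert_self _ _
    obtain ⟨a, ha, hat, hta⟩ :=
      hcover t (Finset.mem_filter.2 ⟨Finset.mem_range.2 htn, ht1, j, hj⟩)
    exact Finset.mem_insert_of_mem (Finset.mem_biUnion.2
      ⟨a, ha, Finset.mem_Icc.2 ⟨hat, hta.trans (by gcongr)⟩⟩)

end ItineraryCount

universe u

section Dynamics

variable {X : Type u}

def IsWanderingSet (f : X → X) (U : Set X) : Prop :=
  ∀ n, 1 ≤ n → Disjoint (f^[n] '' U) U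

theorem IsWanderingSet.eq_of_iterate_mem {f : X → X} {U : Set X} (hU : IsWanderingSet f U)
    {x : X} {t t' : ℕ} (ht : f^[t] x ∈ U) (ht' : f^[t'] x ∈ U) : t = t' := by
  wlog h : t ≤ t' generalizing t t'
  · exact (this ht' ht (le_of_not_ge h)).symm
  by_contra hne
  have hiter : f^[t' - t] (f^[t] x) = f^[t'] x := by
    rw [← Function.iterate_add_apply, Nat.sub_add_cancel h]
  exact Set.disjoint_left.1 (hU (t' - t) (by omega)) ⟨_, ht, hiter⟩ ht'

variable [TopologicalSpace X] {f : X → X}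

theorem exists_isWanderingSet_mem_nhds {p : X} (hp : p ∉ nonWandering f) :
    ∃ U ∈ 𝓝 p, IsWanderingSet f U := by
  simp only [nonWandering, Set.mem_ofPred_eq, not_forall, not_exists, not_and] at hp
  obtain ⟨U, hU, h⟩ := hp
  exact ⟨U, hU, fun n hn =>
    Set.disjoint_iff_inter_eq_empty.2 (Set.not_nonempty_iff_eq_empty.1 (h n hn))⟩

theorem mapsTo_nonWandering (hf : Continuous f) :
    MapsTo f (nonWandering f) (nonWandering f) := by
  intro p hp U hU
  obtain ⟨n, hn, z, ⟨w, hw, rfl⟩, hz⟩ := hp (f ⁻¹' U) (hf.continuousAt.preimage_mem_nhds hU)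
  refine ⟨n, hn, f (f^[n] w), ⟨f w, hw, ?_⟩, hz⟩
  rw [← Function.iterate_succ_apply, Function.iterate_succ_apply']

theorem MutuallySingularSets.comp_equiv {k L : ℕ} {U : Fin k → Set X}
    (hU : MutuallySingularSets f U) (σ : Fin L ≃ Fin k) : MutuallySingularSets f (U ∘ σ) :=
  fun M =>
    let ⟨x, n, hn, hgap⟩ := hU M
    ⟨x, n ∘ σ, fun j => hn (σ j), fun _ _ hij => hgap _ _ (σ.injective.ne hij)⟩

theorem isSingularSet_range {k : ℕ} {y : Fin k → X} (hy : Function.Injective y)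
    (hyNW : ∀ i, y i ∉ nonWandering f)
    (hV : ∀ V : Fin k → Set X, (∀ i, V i ∈ 𝓝 (y i)) → MutuallySingularSets f V) :
    IsSingularSet f (range y) := by
  refine ⟨Set.finite_range y, Set.forall_mem_range.2 hyNW, fun L x hx hxy U hU => ?_⟩
  let σ : Fin L ≃ Fin k :=
    (Equiv.ofInjective x hx).trans ((Equiv.setCongr hxy).trans (Equiv.ofInjective y hy).symm)
  have hσ : ∀ j, y (σ j) = x j := fun j => by
    simp only [σ, Equiv.trans_apply, Equiv.apply_ofInjective_symm, Equiv.setCongr_apply,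
      Equiv.ofInjective_apply]
  have hUσ : U = (U ∘ σ.symm) ∘ σ := by ext1 j; simp
  rw [hUσ]
  refine (hV _ fun i => ?_).comp_equiv σ
  simpa [← hσ] using hU (σ.symm i)

end Dynamics

section MetricDynamics

variable {X : Type u} [MetricSpace X] {f : X → X}

theorem mutuallySingularSets_of_tendsto {k : ℕ} {x : ℕ → X} {n : ℕ → Fin k → ℕ}
    {y : Fin k → X} (hn : ∀ m i, 1 ≤ n m i)
    (hgap : ∀ (m : ℕ) i j, i ≠ j → (m : ℤ) < |(n m i : ℤ) - n m j|)
    (hy : ∀ i, Tendsto (fun m => f^[n m i] (x m)) atTop (𝓝 (y i)))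
    {V : Fin k → Set X} (hV : ∀ i, V i ∈ 𝓝 (y i)) : MutuallySingularSets f V := by
  intro M
  obtain ⟨m, hmV, hMm⟩ := ((eventually_all.2 fun i => (hy i).eventually_mem (hV i)).and
    (eventually_ge_atTop M)).exists
  refine ⟨x m, n m, fun i => ⟨hn m i, hmV i⟩, fun i j hij => ?_⟩
  have := hgap m i j hij
  omega

theorem exists_isSingularSet_range [CompactSpace X] {k : ℕ} {A : Fin k → Set X}
    (hA : ∀ i, Disjoint (closure (A i)) (nonWandering f)) (h : MutuallySingularSets f A) :
    ∃ y : Fin k → X, Function.Injective y ∧ (∀ i, y i ∈ closure (A i)) ∧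
      IsSingularSet f (range y) := by
  choose x n hn hgap using h
  obtain ⟨y, -, φ, hφ, hlim⟩ := isCompact_univ.tendsto_subseq
    (fun m => Set.mem_univ fun i => f^[n m i] (x m))
  have hy : ∀ i, Tendsto (fun m => f^[n (φ m) i] (x (φ m))) atTop (𝓝 (y i)) :=
    tendsto_pi_nhds.1 hlim
  have hyA : ∀ i, y i ∈ closure (A i) := fun i =>
    mem_closure_of_tendsto (hy i) (Eventually.of_forall fun m => (hn (φ m) i).2)
  have hsing : ∀ V : Fin k → Set X, (∀ i, V i ∈ 𝓝 (y i)) → MutuallySingularSets f V :=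
    fun V hV => mutuallySingularSets_of_tendsto (fun m i => (hn (φ m) i).1)
      (fun (m : ℕ) i j hij => lt_of_le_of_lt (by exact_mod_cast hφ.id_le m) (hgap (φ m) i j hij))
      hy hV
  have hyNW : ∀ i, y i ∉ nonWandering f := fun i => Set.disjoint_left.1 (hA i) (hyA i)
  have hinj : Function.Injective y := by
    classical
    intro i j hij
    by_contra hne
    obtain ⟨U, hU, hUw⟩ := exists_isWanderingSet_mem_nhds (hyNW i)
    -- Two visits to one wandering neighbourhood of `y i = y j` must happen at the same time.
    obtain ⟨z, t, ht, hgap'⟩ := hsing (fun l => if y l = y i then U else univ)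
      (fun l => by split_ifs with hl <;> simp_all) 0
    have hti : f^[t i] z ∈ U := by simpa using (ht i).2
    have htj : f^[t j] z ∈ U := by simpa [hij] using (ht j).2
    have := hgap' i j hne
    rw [hUw.eq_of_iterate_mem hti htj, sub_self, abs_zero] at this
    exact this.false
  exact ⟨y, hinj, hyA, isSingularSet_range hinj hyNW hsing⟩

theorem exists_visit_gap_bound [CompactSpace X] {Y : Set X} (hY : MapsTo f Y Y) {L : ℕ}
    (hL : ∀ S ⊆ closure Y, IsSingularSet f S → S.ncard ≤ L) {J : Type*} [Finite J]
    {W : J → Set X} (hW : ∀ j, Disjoint (closure (W j)) (nonWandering f)) :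
    ∃ M : ℕ, ∀ x ∈ Y, ∀ t : Fin (L + 1) → ℕ, (∀ i, 1 ≤ t i ∧ ∃ j, f^[t i] x ∈ W j) →
      ∃ i j, i ≠ j ∧ |(t i : ℤ) - t j| ≤ M := by
  have hbound : ∀ c : Fin (L + 1) → J, ∃ M : ℕ, ∀ x ∈ Y, ∀ t : Fin (L + 1) → ℕ,
      (∀ i, 1 ≤ t i ∧ f^[t i] x ∈ W (c i)) → ∃ i j, i ≠ j ∧ |(t i : ℤ) - t j| ≤ M := by
    intro c
    by_contra! hfar
    have hms : MutuallySingularSets f fun i => W (c i) ∩ Y := fun M =>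
      let ⟨x, hx, t, ht, hgap⟩ := hfar M
      ⟨x, t, fun i => ⟨(ht i).1, (ht i).2, hY.iterate _ hx⟩, hgap⟩
    obtain ⟨y, hy, hyA, hS⟩ := exists_isSingularSet_range
      (fun i => (hW (c i)).mono_left (closure_mono inter_subset_left)) hms
    have := hL (range y) (range_subset_iff.2 fun i => closure_mono inter_subset_right (hyA i)) hS
    rw [ncard_range_of_injective hy, Nat.card_eq_fintype_card, Fintype.card_fin] at this
    omega
  choose M hM using hbound
  obtain ⟨M₀, hM₀⟩ := (Set.finite_range M).bddAbove
  refine ⟨M₀, fun x hx t ht => ?_⟩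
  choose c hc using fun i => (ht i).2
  obtain ⟨i, j, hij, hle⟩ := hM c x hx t fun i => ⟨(ht i).1, hc i⟩
  exact ⟨i, j, hij, hle.trans (by exact_mod_cast hM₀ (mem_range_self c))⟩

theorem eventually_forall_mem_ball_notMem_ball (hf : Continuous f) {p q : X} (hq : q ≠ f p) :
    ∀ᶠ δ in 𝓝[>] (0 : ℝ), ∀ z ∈ Metric.ball p δ, f z ∉ Metric.ball q δ := by
  have hr : 0 < dist q (f p) := dist_pos.2 hq
  obtain ⟨δ₁, hδ₁, hclose⟩ := Metric.continuousAt_iff.1 hf.continuousAt _ (half_pos hr)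
  filter_upwards [Ioo_mem_nhdsGT (lt_min hδ₁ (half_pos hr))] with δ hδ z hz hfz
  have h1 := hclose (lt_of_lt_of_le (Metric.mem_ball.1 hz) (hδ.2.le.trans (min_le_left _ _)))
  have h2 := lt_of_lt_of_le (Metric.mem_ball.1 hfz) (hδ.2.le.trans (min_le_right _ _))
  linarith [dist_triangle_left q (f p) (f z)]

theorem exists_radius_ball_transition (hf : Continuous f) (hNW : (nonWandering f).Finite)
    {ε : ℝ} (hε : 0 < ε) :
    ∃ δ, 0 < δ ∧ 2 * δ ≤ ε ∧ ∀ p ∈ nonWandering f, ∀ q ∈ nonWandering f,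
      ∀ z ∈ Metric.ball p δ, f z ∈ Metric.ball q δ → q = f p := by
  have h : ∀ᶠ δ in 𝓝[>] (0 : ℝ), ∀ p ∈ nonWandering f, ∀ q ∈ nonWandering f,
      ∀ z ∈ Metric.ball p δ, f z ∈ Metric.ball q δ → q = f p := by
    refine hNW.eventually_all.2 fun p _ => hNW.eventually_all.2 fun q _ => ?_
    by_cases hq : q = f p
    · exact Eventually.of_forall fun _ _ _ _ => hq
    · filter_upwards [eventually_forall_mem_ball_notMem_ball hf hq] with δ hδ z hz hfz
      exact absurd hfz (hδ z hz)
  obtain ⟨δ, hδ, hδε⟩ := (h.and (Ioo_mem_nhdsGT (half_pos hε))).exists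
  exact ⟨δ, hδε.1, by linarith [hδε.2], hδ⟩

theorem exists_wanderingSet_cover [CompactSpace X] (hNW : IsClosed (nonWandering f))
    {K : Set X} (hK : IsClosed K) (hKNW : Disjoint K (nonWandering f)) {ε : ℝ} (hε : 0 < ε) :
    ∃ (J : Type u) (_ : Fintype J) (W : J → Set X), K ⊆ ⋃ j, W j ∧ ∀ j,
      IsClosed (W j) ∧ IsWanderingSet f (W j) ∧ Disjoint (W j) (nonWandering f) ∧
        ∀ a ∈ W j, ∀ b ∈ W j, dist a b < ε := by
  have hsmall : ∀ q ∉ nonWandering f, ∃ U ∈ 𝓝 q, IsClosed U ∧ IsWanderingSet f U ∧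
      Disjoint U (nonWandering f) ∧ U ⊆ Metric.ball q (ε / 2) := by
    intro q hq
    obtain ⟨V, hV, hVw⟩ := exists_isWanderingSet_mem_nhds hq
    obtain ⟨U, hU, hUc, hUV⟩ := exists_mem_nhds_isClosed_subset <|
      inter_mem (inter_mem hV (hNW.isOpen_compl.mem_nhds hq)) (Metric.ball_mem_nhds q (half_pos hε))
    refine ⟨U, hU, hUc, fun n hn => ?_, Set.disjoint_left.2 fun z hz => (hUV hz).1.2,
      fun z hz => (hUV hz).2⟩
    exact (hVw n hn).mono (image_mono fun z hz => (hUV hz).1.1) fun z hz => (hUV hz).1.1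
  choose! U hU hUc hUw hUNW hUε using hsmall
  obtain ⟨T, hTK, hKT⟩ := hK.isCompact.elim_nhds_subcover U fun q hq =>
    hU q (Set.disjoint_left.1 hKNW hq)
  refine ⟨T, inferInstance, fun q => U q, fun z hz => ?_, fun q => ?_⟩
  · obtain ⟨q, hq, hzq⟩ := Set.mem_iUnion₂.1 (hKT hz)
    exact Set.mem_iUnion.2 ⟨⟨q, hq⟩, hzq⟩
  · have hq := Set.disjoint_left.1 hKNW (hTK q q.2)
    refine ⟨hUc q hq, hUw q hq, hUNW q hq, fun a ha b hb => ?_⟩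
    linarith [dist_triangle_right a b q, Metric.mem_ball.1 (hUε q hq ha),
      Metric.mem_ball.1 (hUε q hq hb)]

theorem exists_letterMap [CompactSpace X] (hf : Continuous f) (hNW : (nonWandering f).Finite)
    {ε : ℝ} (hε : 0 < ε) :
    ∃ (J : Type u) (_ : Fintype J) (W : J → Set X) (ℓ : X → nonWandering f ⊕ J),
      (∀ a b, ℓ a = ℓ b → dist a b < ε) ∧
      (∀ z p q, ℓ z = .inl p → ℓ (f z) = .inl q → (q : X) = f p) ∧
      (∀ z j, ℓ z = .inr j → z ∈ W j) ∧
      ∀ j, IsWanderingSet f (W j) ∧ Disjoint (closure (W j)) (nonWandering f) := by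
  obtain ⟨δ, hδ, hδε, htrans⟩ := exists_radius_ball_transition hf hNW hε
  set B := ⋃ p ∈ nonWandering f, Metric.ball p δ
  obtain ⟨J, _, W, hcover, hW⟩ := exists_wanderingSet_cover hNW.isClosed
    (isOpen_biUnion fun _ _ => Metric.isOpen_ball).isClosed_compl
    (Set.disjoint_left.2 fun p hpB hp => hpB (mem_biUnion hp (Metric.mem_ball_self hδ))) hε
  let cell : nonWandering f ⊕ J → Set X := Sum.elim (fun p => Metric.ball (p : X) δ) W
  have hcell : ∀ z, ∃ a, z ∈ cell a := by
    intro z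
    by_cases hz : z ∈ B
    · obtain ⟨p, hp, hzp⟩ := mem_iUnion₂.1 hz
      exact ⟨.inl ⟨p, hp⟩, hzp⟩
    · obtain ⟨j, hj⟩ := mem_iUnion.1 (hcover hz)
      exact ⟨.inr j, hj⟩
  choose ℓ hℓ using hcell
  refine ⟨J, inferInstance, W, ℓ, fun a b hab => ?_, fun z p q hp hq => ?_,
    fun z j hj => by simpa [hj, cell] using hℓ z,
    fun j => ⟨(hW j).2.1, by rw [(hW j).1.closure_eq]; exact (hW j).2.2.1⟩⟩
  · have ha := hℓ a
    have hb := hℓ b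
    rw [hab] at ha
    rcases h : ℓ b with p | j <;> simp only [h, cell, Sum.elim_inl, Sum.elim_inr] at ha hb
    · linarith [dist_triangle_right a b p, Metric.mem_ball.1 ha, Metric.mem_ball.1 hb]
    · exact (hW j).2.2.2 a ha b hb
  · have hz := hℓ z
    have hfz := hℓ (f z)
    simp only [hp, hq, cell, Sum.elim_inl] at hz hfz
    exact htrans p p.2 q q.2 z hz hfz

theorem dynDist_lt_of_forall_dist_lt {n : ℕ} {x y : X} {ε : ℝ} (hε : 0 < ε)
    (h : ∀ k < n, dist (f^[k] x) (f^[k] y) < ε) : dynDist f n x y < ε := by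
  have hsup : (Finset.range n).sup (fun k => nndist (f^[k] x) (f^[k] y)) < ε.toNNReal :=
    (Finset.sup_lt_iff (by simpa using hε)).2 fun k hk => by
      rw [← NNReal.coe_lt_coe, coe_nndist, Real.coe_toNNReal _ hε.le]
      exact h k (Finset.mem_range.1 hk)
  calc dynDist f n x y < (ε.toNNReal : ℝ) := NNReal.coe_lt_coe.2 hsup
    _ = ε := Real.coe_toNNReal _ hε.le

theorem exists_maxSep_le_mul_pow [CompactSpace X] (hf : Continuous f)
    (hNW : (nonWandering f).Finite) {Y : Set X} (hY : MapsTo f Y Y) {L : ℕ}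
    (hL : ∀ S ⊆ closure Y, IsSingularSet f S → S.ncard ≤ L) {ε : ℝ} (hε : 0 < ε) :
    ∃ c : ℕ, ∀ n, maxSep f Y n ε ≤ c * (n + 1) ^ L := by
  classical
  have := hNW.fintype
  obtain ⟨J, _, W, ℓ, hℓε, hℓf, hℓW, hW⟩ := exists_letterMap hf hNW hε
  obtain ⟨M, hM⟩ := exists_visit_gap_bound hY hL fun j => (hW j).2
  obtain ⟨c, hc⟩ := exists_card_itineraryCodes_le (β := nonWandering f) (J := J)
    (M * Fintype.card J) L
  let itin : X → ℕ → nonWandering f ⊕ J := fun x t => ℓ (f^[t] x)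
  have hdet : ∀ x t b b', itin x t = .inl b → itin x (t + 1) = .inl b' →
      b' = (mapsTo_nonWandering hf).restrict f _ _ b := fun x t b b' hb hb' =>
    Subtype.ext (hℓf _ b b' hb (by rwa [← Function.iterate_succ_apply' f t x]))
  have honce : ∀ x t t' j, itin x t = .inr j → itin x t' = .inr j → t = t' :=
    fun x t t' j ht ht' => (hW j).1.eq_of_iterate_mem (hℓW _ j ht) (hℓW _ j ht')
  refine ⟨c, fun n => csSup_le' ?_⟩
  rintro _ ⟨E, hEY, rfl, hE⟩
  refine (Finset.card_le_card_of_injOn (fun x => itineraryCode (itin x) n)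
    (fun x hx => itineraryCode_mem_itineraryCodes n (honce x) fun t ht =>
      hM x (hEY hx) t fun i => ⟨(ht i).1, ?_⟩) ?_).trans (hc n)
  · obtain ⟨j, hj⟩ := (ht i).2
    exact ⟨j, hℓW _ j hj⟩
  · intro x hx y hy hxy
    by_contra hne
    exact (hE x hx y hy hne).not_gt (dynDist_lt_of_forall_dist_lt hε fun k hk =>
      hℓε _ _ (eq_of_itineraryCode_eq (hdet x) (hdet y) (honce y) hxy k hk))

end MetricDynamics

theorem limsup_ofReal_log_div_log_le {u : ℕ → ℕ} {c L : ℕ} (hu : ∀ n, u n ≤ c * (n + 1) ^ L) :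
    atTop.limsup (fun n : ℕ => ENNReal.ofReal (Real.log (u n) / Real.log n)) ≤ L := by
  set B := Real.log c + L * Real.log 2
  have hlog : ∀ n : ℕ, 1 ≤ n → Real.log (u n) ≤ B + L * Real.log n := by
    intro n hn
    have hlogn : 0 ≤ Real.log n := Real.log_natCast_nonneg n
    rcases Nat.eq_zero_or_pos (u n) with h0 | hpos
    · rw [h0, Nat.cast_zero, Real.log_zero]
      positivity
    have hc : 0 < c := Nat.pos_of_ne_zero fun hc => by simpa [hc] using (hu n).trans_lt' hpos
    calc Real.log (u n) ≤ Real.log (c * (2 * n) ^ L) := by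
          refine Real.log_le_log (by exact_mod_cast hpos) ?_
          exact_mod_cast (hu n).trans (Nat.mul_le_mul_left _ (Nat.pow_le_pow_left (by omega) L))
      _ = B + L * Real.log n := by
          rw [Real.log_mul (by positivity) (by positivity), Real.log_pow,
            Real.log_mul (by norm_num) (by positivity)]
          ring
  have hratio : ∀ᶠ n : ℕ in atTop,
      Real.log (u n) / Real.log n ≤ L + B / Real.log n := by
    filter_upwards [eventually_ge_atTop 2] with n hn
    have hlogn : 0 < Real.log n := Real.log_pos (by exact_mod_cast hn)
    rw [div_le_iff₀ hlogn, add_mul, div_mul_cancel₀ _ hlogn.ne']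
    linarith [hlog n (by omega)]
  have hlim : Tendsto (fun n : ℕ => (L : ℝ) + B / Real.log n) atTop (𝓝 L) := by
    simpa using tendsto_const_nhds.add (tendsto_const_nhds.div_atTop
      (Real.tendsto_log_atTop.comp tendsto_natCast_atTop_atTop))
  calc atTop.limsup (fun n : ℕ => ENNReal.ofReal (Real.log (u n) / Real.log n))
      ≤ atTop.limsup (fun n : ℕ => ENNReal.ofReal (L + B / Real.log n)) :=
        limsup_le_limsup (hratio.mono fun n hn => ENNReal.ofReal_le_ofReal hn)
    _ = L := by rw [(ENNReal.tendsto_ofReal hlim).limsup_eq, ENNReal.ofReal_natCast]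

theorem polEnt_le_of_forall_ncard_le {X : Type*} [MetricSpace X] [CompactSpace X] {f : X → X}
    (hf : Continuous f) (hNW : (nonWandering f).Finite) {Y : Set X} (hY : MapsTo f Y Y) {L : ℕ}
    (hL : ∀ S ⊆ closure Y, IsSingularSet f S → S.ncard ≤ L) : polEnt f Y ≤ L :=
  iSup₂_le fun _ hε =>
    let ⟨_, hc⟩ := exists_maxSep_le_mul_pow hf hNW hY hL hε
    limsup_ofReal_log_div_log_le hc

theorem ENNReal.le_iSup₂_natCast_of_forall_le {ι : Sort*} {p : ι → Prop} {s : ι → ℕ}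
    {a : ℝ≥0∞} (h : ∀ L : ℕ, (∀ i, p i → s i ≤ L) → a ≤ L) :
    a ≤ ⨆ (i) (_ : p i), (s i : ℝ≥0∞) := by
  have hcast : (⨆ (i) (_ : p i), (s i : ℝ≥0∞)) = ((⨆ (i) (_ : p i), (s i : ℕ∞) : ℕ∞) : ℝ≥0∞) := by
    simp only [ENat.toENNReal_iSup, ENat.toENNReal_coe]
  rw [hcast]
  generalize hm : (⨆ (i) (_ : p i), (s i : ℕ∞)) = m
  induction m using ENat.recTopCoe with
  | top => exact le_top
  | coe L =>
    exact_mod_cast h L fun i hi => by exact_mod_cast hm ▸ le_iSup₂ (f := fun i _ => (s i : ℕ∞)) i hi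

theorem stmt10_general {X : Type*} [MetricSpace X] [CompactSpace X] (f : X → X) (hf : Continuous f)
    (hNW : (nonWandering f).Finite) (Y : Set X) (hY : Set.MapsTo f Y Y) :
    polEnt f Y ≤ ⨆ (S : Set X) (_ : S ⊆ closure Y ∧ IsSingularSet f S), (S.ncard : ℝ≥0∞) :=
  ENNReal.le_iSup₂_natCast_of_forall_le fun _ hL =>
    polEnt_le_of_forall_ncard_le hf hNW hY fun S hSY hS => hL S ⟨hSY, hS⟩

theorem stmt10 {X : Type*} [MetricSpace X] [CompactSpace X] (f : X → X) (hf : Continuous f)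
    (hNW : (nonWandering f).Finite) (Y : Set X) (hY : Set.MapsTo f Y Y)
    (hone : ∃! p, p ∈ Y ∧ p ∈ nonWandering f) :
    polEnt f Y ≤ ⨆ (S : Set X) (_ : S ⊆ closure Y ∧ IsSingularSet f S), (S.ncard : ℝ≥0∞) :=
  stmt10_general f hf hNW Y hY
end
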